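/- Let E be a closed non-empty set in ℝⁿ with |E| = 0, and Q₀ a cube intersecting E. For every t ∈ (0,1), the set 𝓛(t,Q₀,E) = {L ≥ 0 : Σ_{Q ∈ D_E(Q₀), l(Q) ≥ L} |Q| ≥ t|Q₀|} is a closed interval [0, L_t] with 0 < L_t ≤ l(𝓜(Q₀)), where 𝓜(Q₀) is a dyadic subcube of maximal side length in D_E(Q₀). In particular the supremum L_t is attained and is a dyadic fraction 2^{-k₀} l(Q₀) for some integer k₀ ≥ 1. -/

import Mathlib

open MeasureTheory Set
open scoped Classical

/-- A half-open axis-parallel cube in `ℝⁿ`. -/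
structure Cube (n : ℕ) where
  a : Fin n → ℝ
  l : ℝ
  l_pos : 0 < l

namespace Cube

/-- The set of points of the cube. -/
def carrier {n : ℕ} (Q : Cube n) : Set (Fin n → ℝ) :=
  {x | ∀ i, Q.a i ≤ x i ∧ x i < Q.a i + Q.l}

/-- The volume (Lebesgue measure) of the cube. -/
def vol {n : ℕ} (Q : Cube n) : ℝ := Q.l ^ n

end Cube

/-- `Q` is a dyadic subcube of `Q₀` of generation `j`. -/
def IsDyadic {n : ℕ} (Q₀ Q : Cube n) (j : ℕ) : Prop :=
  Q.l = Q₀.l / 2 ^ j ∧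
    ∃ k : Fin n → ℕ, (∀ i, k i < 2 ^ j) ∧ ∀ i, Q.a i = Q₀.a i + (k i : ℝ) * Q₀.l / 2 ^ j

/-- The dyadic system of subcubes of `Q₀`. -/
def dyadicFamily {n : ℕ} (Q₀ : Cube n) : Set (Cube n) := {Q | ∃ j, IsDyadic Q₀ Q j}

/-- `P` is the dyadic parent of `Q` inside the dyadic system of `Q₀`. -/
def IsParent {n : ℕ} (Q₀ P Q : Cube n) : Prop :=
  ∃ j : ℕ, IsDyadic Q₀ Q (j + 1) ∧ IsDyadic Q₀ P j ∧ Q.carrier ⊆ P.carrier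

/-- The family `D_E(Q₀)` of maximal dyadic subcubes of `Q₀` avoiding `E` whose dyadic
parent meets `E`. -/
def DE {n : ℕ} (E : Set (Fin n → ℝ)) (Q₀ : Cube n) : Set (Cube n) :=
  {Q | Q ∈ dyadicFamily Q₀ ∧ Q.carrier ∩ E = ∅ ∧
    ∀ P : Cube n, IsParent Q₀ P Q → (P.carrier ∩ E).Nonempty}

/-- `Σ_{Q ∈ D_E(Q₀), l(Q) ≥ L} |Q|`. -/
noncomputable def sumGE {n : ℕ} (E : Set (Fin n → ℝ)) (Q₀ : Cube n) (L : ℝ) : ℝ :=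
  ∑' Q : {Q : Cube n // Q ∈ DE E Q₀ ∧ L ≤ Q.l}, (Q : Cube n).vol

/-- `Σ_{Q ∈ D_E(Q₀), l(Q) ≤ L} |Q|`. -/
noncomputable def sumLE {n : ℕ} (E : Set (Fin n → ℝ)) (Q₀ : Cube n) (L : ℝ) : ℝ :=
  ∑' Q : {Q : Cube n // Q ∈ DE E Q₀ ∧ Q.l ≤ L}, (Q : Cube n).vol

/-- `Σ_{Q ∈ D_E(Q₀), l(Q) < L} |Q|`. -/
noncomputable def sumLT {n : ℕ} (E : Set (Fin n → ℝ)) (Q₀ : Cube n) (L : ℝ) : ℝ :=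
  ∑' Q : {Q : Cube n // Q ∈ DE E Q₀ ∧ Q.l < L}, (Q : Cube n).vol

/-- `Σ_{Q ∈ D_E(Q₀), l(Q) > L} |Q|`. -/
noncomputable def sumGT {n : ℕ} (E : Set (Fin n → ℝ)) (Q₀ : Cube n) (L : ℝ) : ℝ :=
  ∑' Q : {Q : Cube n // Q ∈ DE E Q₀ ∧ L < Q.l}, (Q : Cube n).vol

/-- The set `𝓛(t,Q₀,E)`. -/
def Lset {n : ℕ} (t : ℝ) (Q₀ : Cube n) (E : Set (Fin n → ℝ)) : Set ℝ :=
  {L | 0 ≤ L ∧ t * Q₀.vol ≤ sumGE E Q₀ L}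

/-- The set `𝓢(t,Q₀,E)`. -/
def Sset {n : ℕ} (t : ℝ) (Q₀ : Cube n) (E : Set (Fin n → ℝ)) : Set ℝ :=
  {L | 0 ≤ L ∧ t * Q₀.vol ≤ sumLE E Q₀ L}

/-- `𝓛_{Q₀}(t) = sup 𝓛(t,Q₀,E)` (the max, when attained). -/
noncomputable def Lfun {n : ℕ} (E : Set (Fin n → ℝ)) (Q₀ : Cube n) (t : ℝ) : ℝ :=
  sSup (Lset t Q₀ E)

/-- `𝓢_{Q₀}(t) = inf 𝓢(t,Q₀,E)` (the min, when attained). -/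
noncomputable def Sfun {n : ℕ} (E : Set (Fin n → ℝ)) (Q₀ : Cube n) (t : ℝ) : ℝ :=
  sInf (Sset t Q₀ E)

/-- The Muckenhoupt class `A_p` (for `p = 1` the `A₁` condition, for `p > 1` the usual
`A_p` condition), with cubes as the testing family. -/
def IsAp {n : ℕ} (p : ℝ) (w : (Fin n → ℝ) → ℝ) : Prop :=
  (∀ᵐ x, 0 < w x) ∧ LocallyIntegrable w volume ∧
    ∃ C : ℝ, 0 < C ∧ ∀ Q : Cube n,
      if p = 1 then
        (∫ x in Q.carrier, w x) / Q.vol ≤ C * essInf w (volume.restrict Q.carrier)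
      else
        ((∫ x in Q.carrier, w x) / Q.vol) *
          ((∫ x in Q.carrier, w x ^ (-1 / (p - 1))) / Q.vol) ^ (p - 1) ≤ C

/-!
The cubes of `D_E(Q₀)` are pairwise disjoint dyadic cubes of side `2^{-j} l(Q₀)` with `j ≥ 1`,
and since `E` is closed and null they cover `Q₀` up to a null set, so their volumes sum to
`|Q₀| > t|Q₀|`. Consequently `S(L) = Σ_{l(Q) ≥ L} |Q|` is antitone, is already `≥ t|Q₀|` for some
dyadic `L = 2^{-k} l(Q₀)` (a finite partial sum exceeds `t|Q₀|`), and is constant on each window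
`(2^{-(k+1)} l(Q₀), 2^{-k} l(Q₀)]`. Taking the first such `k` gives `L_t = 2^{-k} l(Q₀)`; `k ≥ 1`
because no cube of `D_E(Q₀)` has side `l(Q₀)`, and `L_t ≤ l(𝓜(Q₀))` because `S` vanishes beyond
the largest side.
-/

theorem strictAnti_div_two_pow {l : ℝ} (hl : 0 < l) : StrictAnti fun j : ℕ => l / 2 ^ j :=
  fun _ _ hij => div_lt_div_of_pos_left hl (by positivity) (pow_lt_pow_right₀ one_lt_two hij)

theorem exists_div_two_pow_lt (l : ℝ) {ε : ℝ} (hε : 0 < ε) : ∃ j : ℕ, l / 2 ^ j < ε :=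
  ((tendsto_const_nhds.div_atTop (tendsto_pow_atTop_atTop_of_one_lt one_lt_two)).eventually
    (gt_mem_nhds hε)).exists

theorem Summable.subtype_mono {α : Type*} {p q : α → Prop} {f : α → ℝ}
    (hpq : ∀ a, p a → q a) (hf : Summable fun a : {a // q a} => f a) :
    Summable fun a : {a // p a} => f a :=
  hf.comp_injective (Subtype.impEmbedding p q hpq).injective

theorem tsum_subtype_le_of_imp {α : Type*} {p q : α → Prop} {f : α → ℝ}
    (hpq : ∀ a, p a → q a) (hf : Summable fun a : {a // q a} => f a)
    (hf0 : ∀ a, q a → 0 ≤ f a) : ∑' a : {a // p a}, f a ≤ ∑' a : {a // q a}, f a :=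
  tsum_comp_le_tsum_of_inj hf (fun a => hf0 a a.2) (Subtype.impEmbedding p q hpq).injective

/-- Some partial sum already exceeds `c`, and all its terms have `g ≥ L` for `L` the least value
of `g` among them. -/
theorem exists_pos_le_tsum_subtype_le {α : Type*} {p : α → Prop} {f g : α → ℝ} {S c : ℝ}
    (hf0 : ∀ a, p a → 0 ≤ f a) (hg : ∀ a, p a → 0 < g a)
    (hS : HasSum (fun a : {a // p a} => f a) S) (hc : c < S) :
    ∃ L > 0, c ≤ ∑' a : {a // p a ∧ L ≤ g a}, f a := by
  obtain ⟨F, hF⟩ := (hS.eventually (eventually_gt_nhds hc)).exists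
  rcases F.eq_empty_or_nonempty with rfl | hFne
  · exact ⟨1, one_pos, (by simpa using hF : c < 0).le.trans (tsum_nonneg fun a => hf0 a a.2.1)⟩
  obtain ⟨a₀, -, hmin⟩ := F.exists_min_image (fun a => g a) hFne
  refine ⟨g a₀, hg a₀ a₀.2, hF.le.trans ?_⟩
  have hsum : Summable fun a : {a // p a ∧ g a₀ ≤ g a} => f a :=
    hS.summable.subtype_mono fun _ h => h.1
  rw [← Finset.tsum_subtype]
  exact tsum_comp_le_tsum_of_inj hsum (fun a => hf0 a a.2.1)
    (i := fun a : F => ⟨a.1.1, a.1.2, hmin a.1 a.2⟩)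
    fun _ _ h => Subtype.ext <| Subtype.ext <| congrArg (fun a => a.1) h

section

variable {n : ℕ}

namespace Cube

theorem ext {Q Q' : Cube n} (ha : Q.a = Q'.a) (hl : Q.l = Q'.l) : Q = Q' := by
  cases Q; cases Q'; subst ha hl; rfl

theorem carrier_eq_pi (Q : Cube n) :
    Q.carrier = univ.pi fun i => Ico (Q.a i) (Q.a i + Q.l) := by
  ext x; simp [carrier, mem_pi]

theorem measurableSet_carrier (Q : Cube n) : MeasurableSet Q.carrier := by
  rw [carrier_eq_pi]
  exact .univ_pi fun _ => measurableSet_Ico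

theorem vol_pos (Q : Cube n) : 0 < Q.vol := pow_pos Q.l_pos n

theorem volume_carrier (Q : Cube n) : volume Q.carrier = ENNReal.ofReal Q.vol := by
  rw [carrier_eq_pi, volume_pi_pi]
  simp [Real.volume_Ico, vol, ← ENNReal.ofReal_pow Q.l_pos.le]

theorem toReal_volume_carrier (Q : Cube n) : (volume Q.carrier).toReal = Q.vol := by
  rw [volume_carrier, ENNReal.toReal_ofReal Q.vol_pos.le]

theorem dist_lt_of_mem {Q : Cube n} {x y : Fin n → ℝ} (hx : x ∈ Q.carrier)
    (hy : y ∈ Q.carrier) : dist x y < Q.l := by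
  refine (dist_pi_lt_iff Q.l_pos).2 fun i => ?_
  rw [Real.dist_eq, abs_lt]
  constructor <;> linarith [hx i, hy i]

end Cube

noncomputable def dyadicCube (Q₀ : Cube n) (j : ℕ) (k : Fin n → ℕ) : Cube n :=
  ⟨fun i => Q₀.a i + k i * Q₀.l / 2 ^ j, Q₀.l / 2 ^ j, div_pos Q₀.l_pos (by positivity)⟩

/-- The position in the generation-`j` dyadic grid of `Q₀` of the interval containing `x i`. -/
noncomputable def dyadicCoord (Q₀ : Cube n) (j : ℕ) (x : Fin n → ℝ) (i : Fin n) : ℤ :=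
  ⌊2 ^ j * (x i - Q₀.a i) / Q₀.l⌋

variable {Q₀ Q Q' : Cube n} {j j' : ℕ} {x y : Fin n → ℝ}

theorem isDyadic_iff :
    IsDyadic Q₀ Q j ↔
      ∃ k : Fin n → ℕ, (∀ i, k i < 2 ^ j) ∧ Q = dyadicCube Q₀ j k := by
  constructor
  · rintro ⟨hl, k, hk, ha⟩
    exact ⟨k, hk, Cube.ext (funext ha) hl⟩
  · rintro ⟨k, hk, rfl⟩
    exact ⟨rfl, k, hk, fun _ => rfl⟩

theorem dyadicCube_zero (Q₀ : Cube n) : dyadicCube Q₀ 0 0 = Q₀ :=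
  Cube.ext (funext fun _ => by simp [dyadicCube]) (by simp [dyadicCube])

theorem mem_dyadicCube_iff {k : Fin n → ℕ} :
    x ∈ (dyadicCube Q₀ j k).carrier ↔ ∀ i, dyadicCoord Q₀ j x i = k i := by
  have hl := Q₀.l_pos
  refine forall_congr' fun i => ?_
  rw [dyadicCoord, Int.floor_eq_iff, le_div_iff₀ hl, div_lt_iff₀ hl]
  simp only [dyadicCube, Int.cast_natCast]
  constructor <;> rintro ⟨h₁, h₂⟩ <;> constructor
  all_goals field_simp at h₁ h₂ ⊢; linarith

theorem dyadicCoord_eq_ediv {j j' : ℕ} (hj : j ≤ j') (x : Fin n → ℝ) (i : Fin n) :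
    dyadicCoord Q₀ j x i = dyadicCoord Q₀ j' x i / 2 ^ (j' - j) := by
  have h : (2 : ℝ) ^ j * (x i - Q₀.a i) / Q₀.l =
      2 ^ j' * (x i - Q₀.a i) / Q₀.l / ((2 ^ (j' - j) : ℕ) : ℝ) := by
    rw [← pow_sub_mul_pow 2 hj]; push_cast; field_simp
  rw [dyadicCoord, dyadicCoord, h, Int.floor_div_natCast]
  push_cast; rfl

theorem IsDyadic.mem_carrier_iff (hQ : IsDyadic Q₀ Q j) (hx : x ∈ Q.carrier) :
    y ∈ Q.carrier ↔ dyadicCoord Q₀ j y = dyadicCoord Q₀ j x := by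
  obtain ⟨k, -, rfl⟩ := isDyadic_iff.1 hQ
  rw [mem_dyadicCube_iff] at hx ⊢
  exact ⟨fun hy => funext fun i => (hy i).trans (hx i).symm,
    fun hy i => (congrFun hy i).trans (hx i)⟩

theorem IsDyadic.carrier_subset_of_le (hQ : IsDyadic Q₀ Q j) (hQ' : IsDyadic Q₀ Q' j')
    (hj : j ≤ j') (hx : x ∈ Q.carrier) (hx' : x ∈ Q'.carrier) : Q'.carrier ⊆ Q.carrier := by
  intro y hy
  rw [hQ.mem_carrier_iff hx]
  funext i
  rw [dyadicCoord_eq_ediv hj, dyadicCoord_eq_ediv hj, (hQ'.mem_carrier_iff hx').1 hy]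

theorem IsDyadic.eq_of_mem (hQ : IsDyadic Q₀ Q j) (hQ' : IsDyadic Q₀ Q' j)
    (hx : x ∈ Q.carrier) (hx' : x ∈ Q'.carrier) : Q = Q' := by
  obtain ⟨k, -, rfl⟩ := isDyadic_iff.1 hQ
  obtain ⟨k', -, rfl⟩ := isDyadic_iff.1 hQ'
  rw [mem_dyadicCube_iff] at hx hx'
  congr
  funext i
  exact_mod_cast (hx i).symm.trans (hx' i)

theorem IsDyadic.carrier_subset (hQ : IsDyadic Q₀ Q j) : Q.carrier ⊆ Q₀.carrier := by
  obtain ⟨k, hk, rfl⟩ := isDyadic_iff.1 hQ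
  intro y hy
  rw [← dyadicCube_zero Q₀, mem_dyadicCube_iff]
  intro i
  rw [dyadicCoord_eq_ediv (Nat.zero_le j), (mem_dyadicCube_iff.1 hy) i, Int.ediv_eq_zero_of_lt
    (by positivity) (by exact_mod_cast hk i)]
  rfl

theorem IsDyadic.eq_self_of_zero (hQ : IsDyadic Q₀ Q 0) : Q = Q₀ := by
  obtain ⟨k, hk, rfl⟩ := isDyadic_iff.1 hQ
  obtain rfl : k = 0 := funext fun i => by simpa using hk i
  exact dyadicCube_zero Q₀

theorem IsDyadic.gen_eq (hQ : IsDyadic Q₀ Q j) (hQ' : IsDyadic Q₀ Q j') : j = j' :=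
  (strictAnti_div_two_pow Q₀.l_pos).injective (hQ.1.symm.trans hQ'.1)

theorem exists_isDyadic_mem (hx : x ∈ Q₀.carrier) (j : ℕ) :
    ∃ Q, IsDyadic Q₀ Q j ∧ x ∈ Q.carrier := by
  have hl := Q₀.l_pos
  have hcoord (i : Fin n) : 0 ≤ dyadicCoord Q₀ j x i ∧ dyadicCoord Q₀ j x i < 2 ^ j := by
    have h₁ := (hx i).1
    have h₂ := (hx i).2
    rw [dyadicCoord, Int.floor_nonneg, Int.floor_lt, le_div_iff₀ hl, div_lt_iff₀ hl]
    push_cast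
    constructor <;> nlinarith [pow_pos (two_pos : (0 : ℝ) < 2) j]
  refine ⟨dyadicCube Q₀ j fun i => (dyadicCoord Q₀ j x i).toNat,
    isDyadic_iff.2 ⟨_, fun i => ?_, rfl⟩, mem_dyadicCube_iff.2 fun i => ?_⟩
  · exact (Int.toNat_lt (hcoord i).1).2 (hcoord i).2
  · exact (Int.toNat_of_nonneg (hcoord i).1).symm

theorem countable_dyadicFamily (Q₀ : Cube n) : (dyadicFamily Q₀).Countable :=
  (countable_range fun p : ℕ × (Fin n → ℕ) => dyadicCube Q₀ p.1 p.2).mono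
    fun _ ⟨j, hQ⟩ => by
      obtain ⟨k, -, rfl⟩ := isDyadic_iff.1 hQ
      exact ⟨(j, k), rfl⟩

theorem div_two_pow_le_side {Q : Cube n} {k : ℕ} (hQ : Q ∈ dyadicFamily Q₀)
    (h : Q₀.l / 2 ^ (k + 1) < Q.l) : Q₀.l / 2 ^ k ≤ Q.l := by
  obtain ⟨j, hj⟩ := hQ
  rw [hj.1] at h ⊢
  have hjk := (strictAnti_div_two_pow Q₀.l_pos).lt_iff_gt.1 h
  exact (strictAnti_div_two_pow Q₀.l_pos).antitone (by omega)

end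

section

variable {n : ℕ} {E : Set (Fin n → ℝ)} {Q₀ Q Q' : Cube n} {x : Fin n → ℝ}

/-- A cube of `D_E(Q₀)` cannot lie strictly inside an `E`-free dyadic cube: its parent would lie
in between, and the parent meets `E`. -/
theorem gen_le_of_mem_DE {j j' : ℕ} (hQ : Q ∈ DE E Q₀) (hQj : IsDyadic Q₀ Q j)
    (hQ' : IsDyadic Q₀ Q' j') (hQ'E : Q'.carrier ∩ E = ∅)
    (hx : x ∈ Q.carrier) (hx' : x ∈ Q'.carrier) : j ≤ j' := by
  by_contra! hlt
  obtain ⟨m, rfl⟩ : ∃ m, j = m + 1 := Nat.exists_eq_add_one.2 (by omega)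
  obtain ⟨P, hP, hxP⟩ := exists_isDyadic_mem (hQ'.carrier_subset hx') m
  have hQP := hP.carrier_subset_of_le hQj m.le_succ hxP hx
  obtain ⟨z, hzP, hzE⟩ := hQ.2.2 P ⟨m, hQj, hP, hQP⟩
  exact eq_empty_iff_forall_notMem.1 hQ'E z
    ⟨hQ'.carrier_subset_of_le hP (by omega) hx' hxP hzP, hzE⟩

theorem eq_of_mem_DE (hQ : Q ∈ DE E Q₀) (hQ' : Q' ∈ DE E Q₀)
    (hx : x ∈ Q.carrier) (hx' : x ∈ Q'.carrier) : Q = Q' := by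
  obtain ⟨j, hj⟩ := hQ.1
  obtain ⟨j', hj'⟩ := hQ'.1
  obtain rfl : j = j' := le_antisymm (gen_le_of_mem_DE hQ hj hj' hQ'.2.1 hx hx')
    (gen_le_of_mem_DE hQ' hj' hj hQ.2.1 hx' hx)
  exact hj.eq_of_mem hj' hx hx'

theorem pairwiseDisjoint_DE : (DE E Q₀).PairwiseDisjoint Cube.carrier :=
  fun _ hQ _ hQ' hne => disjoint_left.2 fun _ hx hx' => hne (eq_of_mem_DE hQ hQ' hx hx')

theorem biUnion_DE_subset : ⋃ Q ∈ DE E Q₀, Q.carrier ⊆ Q₀.carrier :=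
  iUnion₂_subset fun _ ⟨⟨_, hj⟩, _⟩ => hj.carrier_subset

theorem side_lt_of_mem_DE (hQ₀ : (Q₀.carrier ∩ E).Nonempty) (hQ : Q ∈ DE E Q₀) :
    Q.l < Q₀.l := by
  obtain ⟨j, hj⟩ := hQ.1
  rcases j with _ | j
  · exact absurd (hj.eq_self_of_zero ▸ hQ.2.1) hQ₀.ne_empty
  · rw [hj.1]
    simpa using strictAnti_div_two_pow Q₀.l_pos j.succ_pos

/-- The cube is the dyadic cube of least generation around `x` that misses `E`; small cubes around
`x` miss `E` since `E` is closed. -/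
theorem exists_mem_DE (hE : IsClosed E) (hx : x ∈ Q₀.carrier) (hxE : x ∉ E) :
    ∃ Q ∈ DE E Q₀, x ∈ Q.carrier := by
  have hex : ∃ j, ∃ Q, IsDyadic Q₀ Q j ∧ x ∈ Q.carrier ∧ Q.carrier ∩ E = ∅ := by
    obtain ⟨ε, hε, hball⟩ := Metric.isOpen_iff.1 hE.isOpen_compl x hxE
    obtain ⟨j, hj⟩ := exists_div_two_pow_lt Q₀.l hε
    obtain ⟨Q, hQ, hxQ⟩ := exists_isDyadic_mem hx j
    refine ⟨j, Q, hQ, hxQ, eq_empty_of_forall_notMem fun y ⟨hyQ, hyE⟩ => hball ?_ hyE⟩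
    exact (Q.dist_lt_of_mem hyQ hxQ).trans (hQ.1 ▸ hj)
  obtain ⟨Q, hQ, hxQ, hQE⟩ := Nat.find_spec hex
  refine ⟨Q, ⟨⟨_, hQ⟩, hQE, fun P ⟨j, hQj, hP, hQP⟩ => ?_⟩, hxQ⟩
  refine nonempty_iff_ne_empty.2 fun hPE => ?_
  have := hQj.gen_eq hQ
  exact Nat.find_min hex (by omega : j < Nat.find hex) ⟨P, hP, hQP hxQ, hPE⟩

end

section

variable {n : ℕ} {E : Set (Fin n → ℝ)} {Q₀ : Cube n}

theorem countable_DE : (DE E Q₀).Countable :=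
  (countable_dyadicFamily Q₀).mono fun _ hQ => hQ.1

theorem tsum_volume_DE :
    ∑' Q : DE E Q₀, volume Q.1.carrier = volume (⋃ Q ∈ DE E Q₀, Q.carrier) :=
  (measure_biUnion countable_DE pairwiseDisjoint_DE fun Q _ => Q.measurableSet_carrier).symm

theorem volume_biUnion_DE (hE : IsClosed E) (hE0 : volume E = 0) :
    volume (⋃ Q ∈ DE E Q₀, Q.carrier) = volume Q₀.carrier := by
  refine le_antisymm (measure_mono biUnion_DE_subset) (measure_mono_ae (ae_le_set.2 ?_))
  refine measure_mono_null (fun x ⟨hx, hxU⟩ => ?_) hE0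
  by_contra hxE
  obtain ⟨Q, hQ, hxQ⟩ := exists_mem_DE hE hx hxE
  exact hxU (mem_biUnion hQ hxQ)

theorem summable_vol_DE : Summable fun Q : DE E Q₀ => Q.1.vol := by
  have hfin : ∑' Q : DE E Q₀, volume Q.1.carrier ≠ ⊤ := by
    rw [tsum_volume_DE]
    exact ne_top_of_le_ne_top (by simp [Cube.volume_carrier]) (measure_mono biUnion_DE_subset)
  simpa only [Cube.toReal_volume_carrier] using ENNReal.summable_toReal hfin

theorem hasSum_vol_DE (hE : IsClosed E) (hE0 : volume E = 0) :
    HasSum (fun Q : DE E Q₀ => Q.1.vol) Q₀.vol := by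
  refine summable_vol_DE.hasSum_iff.2 ?_
  simp_rw [← Cube.toReal_volume_carrier]
  rw [← ENNReal.tsum_toReal_eq fun Q => by simp [Cube.volume_carrier], tsum_volume_DE,
    volume_biUnion_DE hE hE0]

theorem summable_vol_DE_ge (L : ℝ) :
    Summable fun Q : {Q : Cube n // Q ∈ DE E Q₀ ∧ L ≤ Q.l} => Q.1.vol :=
  summable_vol_DE.subtype_mono fun _ h => h.1

theorem sumGE_antitone : Antitone (sumGE E Q₀) := fun L _ h =>
  tsum_subtype_le_of_imp (fun _ hQ => ⟨hQ.1, h.trans hQ.2⟩) (summable_vol_DE_ge L)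
    fun Q _ => Q.vol_pos.le

theorem sumGE_le_of_div_two_pow_lt {k : ℕ} {L : ℝ} (h : Q₀.l / 2 ^ (k + 1) < L) :
    sumGE E Q₀ L ≤ sumGE E Q₀ (Q₀.l / 2 ^ k) :=
  tsum_subtype_le_of_imp (fun _ hQ => ⟨hQ.1, div_two_pow_le_side hQ.1.1 (h.trans_le hQ.2)⟩)
    (summable_vol_DE_ge _) fun Q _ => Q.vol_pos.le

theorem sumGE_eq_zero {L : ℝ} (h : ∀ Q ∈ DE E Q₀, Q.l < L) : sumGE E Q₀ L = 0 := by
  have : IsEmpty {Q : Cube n // Q ∈ DE E Q₀ ∧ L ≤ Q.l} :=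
    ⟨fun Q => (h Q.1 Q.2.1).not_ge Q.2.2⟩
  exact tsum_empty

theorem exists_le_sumGE_div_two_pow (hE : IsClosed E) (hE0 : volume E = 0) {t : ℝ}
    (ht : t < 1) : ∃ k : ℕ, t * Q₀.vol ≤ sumGE E Q₀ (Q₀.l / 2 ^ k) := by
  obtain ⟨L, hL, htL⟩ := exists_pos_le_tsum_subtype_le (fun Q _ => Q.vol_pos.le)
    (fun Q _ => Q.l_pos) (hasSum_vol_DE hE hE0) (mul_lt_of_lt_one_left Q₀.vol_pos ht)
  obtain ⟨k, hk⟩ := exists_div_two_pow_lt Q₀.l hL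
  exact ⟨k, htL.trans (sumGE_antitone hk.le)⟩

theorem Lset_eq_Icc {t : ℝ} {k : ℕ} (hk : t * Q₀.vol ≤ sumGE E Q₀ (Q₀.l / 2 ^ (k + 1)))
    (hk' : sumGE E Q₀ (Q₀.l / 2 ^ k) < t * Q₀.vol) :
    Lset t Q₀ E = Icc 0 (Q₀.l / 2 ^ (k + 1)) := by
  ext L
  refine ⟨fun ⟨hL0, hL⟩ => ⟨hL0, le_of_not_gt fun hlt => ?_⟩,
    fun ⟨hL0, hL⟩ => ⟨hL0, hk.trans (sumGE_antitone hL)⟩⟩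
  exact (hL.trans (sumGE_le_of_div_two_pow_lt hlt)).not_gt hk'

end

theorem stmt5_general {n : ℕ} (E : Set (Fin n → ℝ)) (hE : IsClosed E)
    (hE0 : volume E = 0) (Q₀ : Cube n) (hQ₀ : (Q₀.carrier ∩ E).Nonempty)
    (t : ℝ) (ht : t ∈ Set.Ioo (0 : ℝ) 1)
    (M : Cube n) (hMmax : ∀ Q ∈ DE E Q₀, Q.l ≤ M.l) :
    ∃ Lt : ℝ, 0 < Lt ∧ Lt ≤ M.l ∧ Lset t Q₀ E = Set.Icc 0 Lt ∧
      ∃ k₀ : ℕ, 1 ≤ k₀ ∧ Lt = Q₀.l / 2 ^ k₀ := by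
  have htvol : 0 < t * Q₀.vol := mul_pos ht.1 Q₀.vol_pos
  have hex := exists_le_sumGE_div_two_pow (Q₀ := Q₀) hE hE0 ht.2
  obtain ⟨k, hk⟩ : ∃ k, Nat.find hex = k + 1 := Nat.exists_eq_add_one.2 <|
    Nat.pos_of_ne_zero fun h0 => by
      have h := Nat.find_spec hex
      rw [h0, pow_zero, div_one, sumGE_eq_zero fun Q hQ => side_lt_of_mem_DE hQ₀ hQ] at h
      exact h.not_gt htvol
  have hmem := hk ▸ Nat.find_spec hex
  have hLset := Lset_eq_Icc hmem (not_le.1 (Nat.find_min hex (hk ▸ k.lt_succ_self)))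
  refine ⟨Q₀.l / 2 ^ (k + 1), div_pos Q₀.l_pos (by positivity), le_of_not_gt fun hlt => ?_,
    hLset, k + 1, k.succ_pos, rfl⟩
  rw [sumGE_eq_zero fun Q hQ => (hMmax Q hQ).trans_lt hlt] at hmem
  exact hmem.not_gt htvol

/-- For `t ∈ (0,1)`, the set `𝓛(t,Q₀,E)` is a closed interval `[0, L_t]` with
`0 < L_t ≤ l(𝓜(Q₀))`, and `L_t = 2^{-k₀} l(Q₀)` for some `k₀ ≥ 1`. -/
theorem stmt5 {n : ℕ} (E : Set (Fin n → ℝ)) (hE : IsClosed E) (hne : E.Nonempty)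
    (hE0 : volume E = 0) (Q₀ : Cube n) (hQ₀ : (Q₀.carrier ∩ E).Nonempty)
    (t : ℝ) (ht : t ∈ Set.Ioo (0 : ℝ) 1)
    (M : Cube n) (hM : M ∈ DE E Q₀) (hMmax : ∀ Q ∈ DE E Q₀, Q.l ≤ M.l) :
    ∃ Lt : ℝ, 0 < Lt ∧ Lt ≤ M.l ∧ Lset t Q₀ E = Set.Icc 0 Lt ∧
      ∃ k₀ : ℕ, 1 ≤ k₀ ∧ Lt = Q₀.l / 2 ^ k₀ :=
  stmt5_general E hE hE0 Q₀ hQ₀ t ht M hMmax
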